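/- arXiv:1708.08864 — 3 statements merged into one kernel-verified Lean document; each statement's English description precedes it below -/
import Mathlib

section
/- Let C_n be the cycle on n ≥ 4 vertices and set m = n/2 + 1 if n is even and m = (n+1)/2 + 1 if n is odd. Then there exists a bijective labeling of the vertices of C_n by {1,…,n} such that every admissible path has at most m vertices. -/
/-- A list of vertices forms a path in `G`: consecutive vertices are adjacent
and all vertices are distinct. -/
def IsPathList {V : Type*} (G : SimpleGraph V) (l : List V) : Prop :=
  l.Chain' G.Adj ∧ l.Nodup

/-- A list of vertices is an *admissible path* in a graph `G` on `{1,…,n}`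
(modeled as `Fin n`): it is a path from `i` to `j` with `i < j`, every
interior vertex is `< i` or `> j`, and no proper (ordered) subset of the
interior vertices together with `i` and `j` forms a path in `G`. -/
def IsAdmissible {n : ℕ} (G : SimpleGraph (Fin n)) (l : List (Fin n)) : Prop :=
  ∃ i j : Fin n, i < j ∧ l.head? = some i ∧ l.getLast? = some j ∧
    IsPathList G l ∧
    (∀ v ∈ l.tail.dropLast, v < i ∨ j < v) ∧
    (∀ l' : List (Fin n), l'.Sublist l.tail.dropLast → l' ≠ l.tail.dropLast →
      ¬ IsPathList G (i :: (l' ++ [j])))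

/-!
Place label `k` at position `k (n + 1) / 2` of the cycle when `n` is odd; for `n = 2h` let the
positions of the labels `0, 1, 2, …` advance alternately by `h` and by `-1`. Thus consecutive labels
are antipodal (at cyclic distance `⌊n / 2⌋`), except that for even `n` an odd label is adjacent to
its successor. A path in the cycle is an arc, and the labels strictly between the ends `i < j` of an
admissible path lie off it. If `i` and `i + 1` are antipodal, then `i + 1` lies off the arc or is
its end, so the arc spans at most half the cycle. Otherwise, `j = i + 1` forces the path to be the
edge `ij` by minimality, while for `j > i + 1` the antipodal pair `i + 1`, `i + 2` lies off the arc
(or at its end), which again leaves at most half the cycle for the arc.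
-/

open SimpleGraph

lemma List.eq_cons_dropLast_tail_append {α : Type*} {l : List α} {a b : α}
    (ha : l.head? = some a) (hb : l.getLast? = some b) (hab : a ≠ b) :
    l = a :: (l.tail.dropLast ++ [b]) := by
  obtain ⟨t, rfl⟩ := List.head?_eq_some_iff.1 ha
  obtain ⟨s, rfl⟩ : ∃ s, t = s ++ [b] := by
    cases t with
    | nil => simp_all
    | cons c t => exact List.getLast?_eq_some_iff.1 (by rwa [List.getLast?_cons_cons] at hb)
  simp

lemma isPathList_map_equiv_iff {V W : Type*} {G : SimpleGraph V} (e : V ≃ W) {l : List W} :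
    IsPathList (G.map e.toEmbedding) l ↔ IsPathList G (l.map e.symm) := by
  rw [← comap_symm, IsPathList, IsPathList, List.Chain', List.Chain', List.isChain_map,
    List.nodup_map_iff e.symm.injective]
  rfl

lemma IsAdmissible.exists_endpoints {n : ℕ} {G : SimpleGraph (Fin n)} {l : List (Fin n)}
    (h : IsAdmissible G l) :
    ∃ i j, i < j ∧ l.head? = some i ∧ l.getLast? = some j ∧ IsPathList G l ∧
      (∀ w, i < w → w < j → w ∉ l) ∧ (G.Adj i j → l.length ≤ 2) := by
  obtain ⟨i, j, hij, hi, hj, hpath, hout, hmin⟩ := h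
  have hl := List.eq_cons_dropLast_tail_append hi hj hij.ne
  refine ⟨i, j, hij, hi, hj, hpath, fun w hiw hwj hw => ?_, fun hadj => ?_⟩
  · rw [hl, List.mem_cons, List.mem_append, List.mem_singleton] at hw
    rcases hw with rfl | hw | rfl
    · exact hiw.false
    · rcases hout w hw with h | h
      exacts [(hiw.trans h).false, (hwj.trans h).false]
    · exact hwj.false
  · by_contra hlen
    refine hmin [] (List.nil_sublist _) (fun hnil => hlen ?_) ⟨List.isChain_pair.2 hadj, ?_⟩
    · rw [hl, ← hnil]; rfl
    · simpa using hij.ne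

lemma Int.eq_and_two_dvd_sub_of_two_mul_dvd {r a a' c c' : ℤ}
    (h : 2 * r ∣ (a' * r + c) - (a * r + c')) (hc : |c - c'| < r) : c = c' ∧ 2 ∣ a' - a := by
  obtain rfl : c = c' := by
    have hdvd : r ∣ c - c' := by
      rw [show c - c' = a' * r + c - (a * r + c') - (a' - a) * r by ring]
      exact (dvd_trans (dvd_mul_left r 2) h).sub (dvd_mul_left r (a' - a))
    linarith [Int.eq_zero_of_abs_lt_dvd hdvd hc]
  rw [show a' * r + c - (a * r + c) = (a' - a) * r by ring,
    mul_dvd_mul_iff_right (ne_of_gt ((abs_nonneg _).trans_lt hc))] at h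
  exact ⟨rfl, h⟩

section Cycle

open Fin.NatCast Fin.CommRing

variable {n : ℕ}

lemma cycleGraph_adj_iff_sub [NeZero n] (hn : 2 ≤ n) {u v : Fin n} :
    (cycleGraph n).Adj u v ↔ v - u = 1 ∨ v - u = -1 := by
  have hval : ∀ x : Fin n, x.val = 1 ↔ x = 1 := fun x => by
    rw [Fin.ext_iff, Fin.val_one', Nat.mod_eq_of_lt (by omega)]
  rw [cycleGraph_adj', hval, hval, ← neg_sub v u, neg_eq_iff_eq_neg, or_comm]

def Fin.IsAntipodal (u v : Fin n) : Prop :=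
  n / 2 ≤ (u - v).val ∧ n / 2 ≤ (v - u).val

namespace Fin.IsAntipodal

variable {u v : Fin n}

lemma symm (h : IsAntipodal u v) : IsAntipodal v u := ⟨h.2, h.1⟩

variable [NeZero n]

lemma sub_mul (h : IsAntipodal u v) (p : Fin n) {d : Fin n} (hd : d = 1 ∨ d = -1) :
    IsAntipodal ((u - p) * d) ((v - p) * d) := by
  unfold IsAntipodal at h ⊢
  rcases hd with rfl | rfl
  · simpa only [mul_one, sub_sub_sub_cancel_right] using h
  · simpa only [mul_neg_one, neg_sub_neg, sub_sub_sub_cancel_right] using h.symm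

lemma val_sep (h : IsAntipodal u v) :
    (u.val + n / 2 ≤ v.val ∧ v.val ≤ u.val + (n + 1) / 2) ∨
      (v.val + n / 2 ≤ u.val ∧ u.val ≤ v.val + (n + 1) / 2) := by
  obtain ⟨huv, hvu⟩ := h
  rcases lt_trichotomy u v with hlt | rfl | hlt
  · rw [Fin.coe_sub_iff_lt.2 hlt] at huv
    rw [Fin.coe_sub_iff_le.2 hlt.le] at hvu
    omega
  · simp only [sub_self, Fin.val_zero] at huv
    omega
  · rw [Fin.coe_sub_iff_lt.2 hlt] at hvu
    rw [Fin.coe_sub_iff_le.2 hlt.le] at huv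
    omega

end Fin.IsAntipodal

variable [NeZero n]

lemma Fin.isAntipodal_add_half (u : Fin n) : u.IsAntipodal (u + ((n + 1) / 2 : ℕ)) := by
  rw [Fin.IsAntipodal, sub_add_cancel_left, add_sub_cancel_left, Fin.val_neg', Fin.val_natCast]
  rcases (show n = 1 ∨ 2 ≤ n by have := NeZero.pos n; omega) with rfl | hn
  · simp
  · rw [Nat.mod_eq_of_lt (by omega : (n + 1) / 2 < n), Nat.mod_eq_of_lt (by omega)]
    omega

lemma IsPathList.cycleGraph_getElem_eq {l : List (Fin n)} (hl : IsPathList (cycleGraph n) l) :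
    ∃ d : Fin n, (d = 1 ∨ d = -1) ∧
      ∀ t (ht : t < l.length), l[t] = l[0]'(by omega) + t * d := by
  obtain ⟨hchain, hnodup⟩ := hl
  rcases lt_or_ge l.length 2 with hlen | hlen
  · refine ⟨1, Or.inl rfl, fun t ht => ?_⟩
    obtain rfl : t = 0 := by omega
    simp
  have hn : 2 ≤ n := by simpa using hlen.trans hnodup.length_le_card
  have hstep : ∀ t (ht : t + 1 < l.length), l[t + 1] - l[t] = 1 ∨ l[t + 1] - l[t] = -1 :=
    fun t ht => (cycleGraph_adj_iff_sub hn).1 (List.isChain_iff_getElem.1 hchain t ht)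
  set d := l[1] - l[0]
  -- two opposite steps in a row would revisit a vertex
  have hconst : ∀ t (ht : t + 1 < l.length), l[t + 1] - l[t] = d := by
    intro t
    induction t with
    | zero => intro; rfl
    | succ t ih =>
      intro ht
      have hback : l[t + 1 + 1] ≠ l[t] := fun h => by
        have := (hnodup.getElem_inj_iff).1 h
        omega
      rw [← ih (by omega)]
      rcases hstep (t + 1) ht with h | h <;> rcases hstep t (by omega) with h' | h'
      · rw [h, h']
      · exact absurd (by linear_combination h + h') hback
      · exact absurd (by linear_combination h + h') hback
      · rw [h, h']
  refine ⟨d, hstep 0 hlen, fun t => ?_⟩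
  induction t with
  | zero => intro; simp
  | succ t ih =>
    intro ht
    rw [sub_eq_iff_eq_add'.1 (hconst t ht), ih (by omega)]
    push_cast
    ring

/-- `τ` is the rotation or reflection of the cycle carrying the path onto `0, 1, …, L - 1`. -/
lemma IsPathList.cycleGraph_exists_unroll {l : List (Fin n)} (hl : IsPathList (cycleGraph n) l)
    {p q : Fin n} (hp : l.head? = some p) (hq : l.getLast? = some q) :
    ∃ τ : Fin n → Fin n, τ p = 0 ∧ (τ q).val + 1 = l.length ∧
      (∀ w ∉ l, l.length ≤ (τ w).val) ∧ ∀ u v, u.IsAntipodal v → (τ u).IsAntipodal (τ v) := by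
  obtain ⟨d, hd, harc⟩ := hl.cycleGraph_getElem_eq
  have hdd : d * d = 1 := by rcases hd with rfl | rfl <;> ring
  have hlen : l.length ≤ n := by simpa using hl.2.length_le_card
  obtain ⟨h0, hp0⟩ := List.getElem?_eq_some_iff.1 (List.head?_eq_getElem? ▸ hp)
  obtain ⟨hL, hqL⟩ := List.getElem?_eq_some_iff.1 (List.getLast?_eq_getElem? ▸ hq)
  refine ⟨fun w => (w - p) * d, by simp, ?_, fun w hw => ?_, fun u v h => h.sub_mul p hd⟩
  · dsimp only
    rw [← hqL, harc _ hL, hp0, add_sub_cancel_left, mul_assoc, hdd, mul_one, Fin.val_natCast,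
      Nat.mod_eq_of_lt (by omega)]
    omega
  · by_contra! hlt
    refine hw ?_
    convert List.getElem_mem hlt
    rw [harc _ hlt, hp0, Fin.cast_val_eq_self]
    linear_combination (p - w) * hdd

section
variable {l : List (Fin n)} {p q : Fin n}

lemma IsPathList.cycleGraph_length_le_of_isAntipodal_head (hl : IsPathList (cycleGraph n) l)
    (hp : l.head? = some p) (hq : l.getLast? = some q) {v : Fin n} (hv : v ∉ l ∨ v = q)
    (hpv : p.IsAntipodal v) : l.length ≤ (n + 1) / 2 + 1 := by
  obtain ⟨τ, hτp, hτq, hτout, hτanti⟩ := hl.cycleGraph_exists_unroll hp hq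
  have hτv : l.length ≤ (τ v).val + 1 := by
    rcases hv with hv | rfl
    exacts [(hτout v hv).trans (Nat.le_succ _), hτq.ge]
  have := (hτanti p v hpv).val_sep
  rw [hτp, Fin.val_zero] at this
  omega

lemma IsPathList.cycleGraph_length_add_le_of_isAntipodal (hl : IsPathList (cycleGraph n) l)
    (hp : l.head? = some p) (hq : l.getLast? = some q) {u v : Fin n} (hu : u ∉ l)
    (hv : v ∉ l ∨ v = q) (huv : u.IsAntipodal v) : l.length + n / 2 ≤ n := by
  obtain ⟨τ, -, hτq, hτout, hτanti⟩ := hl.cycleGraph_exists_unroll hp hq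
  have hτv : l.length ≤ (τ v).val + 1 := by
    rcases hv with hv | rfl
    exacts [(hτout v hv).trans (Nat.le_succ _), hτq.ge]
  have := (hτanti u v huv).val_sep
  have := hτout u hu
  have := (τ u).isLt
  have := (τ v).isLt
  omega

end

/-- Labels `1, …, n` are encoded as `0, …, n - 1`. -/
def labelPos (n : ℕ) [NeZero n] (k : ℕ) : Fin n :=
  if Even n then (((k + 1) / 2 * ((n + 1) / 2) : ℕ) : Fin n) - (k / 2 : ℕ)
  else ((k * ((n + 1) / 2) : ℕ) : Fin n)

lemma labelPos_succ {k : ℕ} (h : Even k ∨ Odd n) :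
    labelPos n (k + 1) = labelPos n k + ((n + 1) / 2 : ℕ) := by
  unfold labelPos
  split_ifs with hn
  · obtain ⟨a, rfl⟩ : Even k := h.resolve_right (Nat.not_odd_iff_even.2 hn)
    rw [show (a + a + 1 + 1) / 2 = a + 1 by omega, show (a + a + 1) / 2 = a by omega,
      show (a + a) / 2 = a by omega]
    push_cast
    ring
  · push_cast
    ring

lemma labelPos_succ_of_odd {k : ℕ} (hn : Even n) (hk : Odd k) :
    labelPos n (k + 1) = labelPos n k - 1 := by
  obtain ⟨a, rfl⟩ := hk
  rw [labelPos, labelPos, if_pos hn, if_pos hn, show (2 * a + 1 + 1 + 1) / 2 = a + 1 by omega,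
    show (2 * a + 1 + 1) / 2 = a + 1 by omega, show (2 * a + 1) / 2 = a by omega]
  push_cast
  ring

lemma labelPos_mul_two_of_not_even (hn : ¬Even n) (k : ℕ) : labelPos n k * 2 = k := by
  have h2 : (n + 1) / 2 * 2 = n + 1 := by
    have := Nat.odd_iff.1 (Nat.not_even_iff_odd.1 hn)
    omega
  rw [labelPos, if_neg hn, show (2 : Fin n) = ((2 : ℕ) : Fin n) by norm_cast, ← Nat.cast_mul,
    mul_assoc, h2, mul_add, mul_one, Nat.cast_add, Nat.cast_mul, CharP.cast_eq_zero (Fin n) n,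
    mul_zero, zero_add]

lemma labelPos_injective : Function.Injective (fun k : Fin n => labelPos n k) := by
  intro k k' h
  by_cases hn : Even n
  · dsimp only [labelPos] at h
    rw [if_pos hn, if_pos hn] at h
    obtain ⟨r, rfl⟩ := hn
    rw [show (r + r + 1) / 2 = r by omega, sub_eq_sub_iff_add_eq_add] at h
    norm_cast at h
    rw [CharP.natCast_eq_natCast (Fin (r + r)) (r + r), Nat.modEq_iff_dvd] at h
    have hk := k.isLt
    have hk' := k'.isLt
    have := Int.eq_and_two_dvd_sub_of_two_mul_dvd (r := r) (a := ((k.val + 1) / 2 : ℕ))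
      (a' := ((k'.val + 1) / 2 : ℕ)) (c := (k.val / 2 : ℕ)) (c' := (k'.val / 2 : ℕ))
      (by push_cast at h ⊢; rwa [two_mul]) (abs_lt.2 ⟨by omega, by omega⟩)
    exact Fin.ext (by omega)
  · have := congrArg (· * 2) h
    simp only [labelPos_mul_two_of_not_even hn] at this
    rwa [Fin.cast_val_eq_self, Fin.cast_val_eq_self] at this

noncomputable def labelEquiv (n : ℕ) [NeZero n] : Fin n ≃ Fin n :=
  Equiv.ofBijective _ (Finite.injective_iff_bijective.1 labelPos_injective)

lemma labelEquiv_apply (k : Fin n) : labelEquiv n k = labelPos n k := rfl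

lemma IsAdmissible.length_le_of_labelEquiv {l : List (Fin n)}
    (hl : IsAdmissible ((cycleGraph n).map (labelEquiv n).symm.toEmbedding) l) :
    l.length ≤ (n + 1) / 2 + 1 := by
  set E := labelEquiv n
  obtain ⟨i, j, hij, hi, hj, hpath, hout, hadj⟩ := hl.exists_endpoints
  rw [isPathList_map_equiv_iff, Equiv.symm_symm] at hpath
  have hi' : (l.map E).head? = some (E i) := by simp [hi]
  have hj' : (l.map E).getLast? = some (E j) := by simp [hj]
  have hoff : ∀ w, i < w → w < j → E w ∉ l.map E := fun w hiw hwj h =>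
    hout w hiw hwj ((List.mem_map_of_injective E.injective).1 h)
  have hnext : ∀ w, i < w → w ≤ j → E w ∉ l.map E ∨ E w = E j := fun w hiw hwj => by
    rcases hwj.lt_or_eq with hwj | rfl
    exacts [Or.inl (hoff w hiw hwj), Or.inr rfl]
  rw [← List.length_map E]
  have hlt : i.val + 1 < n := by omega
  set w₁ : Fin n := ⟨i.val + 1, hlt⟩
  have hiw₁ : i < w₁ := Fin.lt_def.2 (Nat.lt_succ_self _)
  have hw₁j : w₁ ≤ j := Fin.le_def.2 hij
  by_cases hpar : Even i.val ∨ Odd n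
  · refine hpath.cycleGraph_length_le_of_isAntipodal_head hi' hj' (hnext w₁ hiw₁ hw₁j) ?_
    rw [labelEquiv_apply, labelEquiv_apply, labelPos_succ hpar]
    exact Fin.isAntipodal_add_half _
  simp only [not_or, Nat.not_even_iff_odd, Nat.not_odd_iff_even] at hpar
  rcases hw₁j.lt_or_eq with hw₁j | hw₁j
  · set w₂ : Fin n := ⟨i.val + 2, by omega⟩
    have := hpath.cycleGraph_length_add_le_of_isAntipodal hi' hj' (u := E w₁) (v := E w₂)
      (hoff w₁ hiw₁ hw₁j)
      (hnext w₂ (Fin.lt_def.2 (by simp [w₂])) (Fin.le_def.2 (by simp [w₂]; omega)))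
      (by rw [labelEquiv_apply, labelEquiv_apply, labelPos_succ (Or.inl hpar.1.add_one)]
          exact Fin.isAntipodal_add_half _)
    omega
  · have hE : E j = E i - 1 := by
      rw [labelEquiv_apply, labelEquiv_apply, ← hw₁j, labelPos_succ_of_odd hpar.2 hpar.1]
    have : (cycleGraph n).map E.symm.toEmbedding |>.Adj i j := by
      rw [map_symm, comap_adj, Equiv.toEmbedding_apply, Equiv.toEmbedding_apply,
        cycleGraph_adj_iff_sub (by omega), hE]
      exact Or.inr (by ring)
    simpa using (hadj this).trans (by omega)

end Cycle

/-- There is a labeling of the cycle `C_n` (`n ≥ 4`) by `{1,…,n}` such that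
every admissible path has at most `m` vertices, where `m = n/2 + 1` if `n` is
even and `m = (n+1)/2 + 1` if `n` is odd. -/
theorem cycle_exists_good_labeling {n : ℕ} (hn : 4 ≤ n)
    (m : ℕ) (hm : m = if Even n then n / 2 + 1 else (n + 1) / 2 + 1) :
    ∃ e : Fin n ≃ Fin n, ∀ l : List (Fin n),
      IsAdmissible ((SimpleGraph.cycleGraph n).map e.toEmbedding) l →
      l.length ≤ m := by
  have : NeZero n := ⟨by omega⟩
  have hm' : m = (n + 1) / 2 + 1 := by
    rw [hm]
    split_ifs with h
    · obtain ⟨r, rfl⟩ := h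
      omega
    · rfl
  exact ⟨(labelEquiv n).symm, fun l hl => hm' ▸ hl.length_le_of_labelEquiv⟩
end

section
/- Every caterpillar tree T with n vertices admits a bijective labeling of its vertices by {1,…,n} such that the graph distance d(i, i+1) ≤ 2 for all 1 ≤ i < n. Consequently, every admissible path in T (with respect to this labeling) has at most 3 vertices. -/
/-- A caterpillar tree: a tree containing a path (the central path) such that
every vertex is on the path or adjacent to a vertex of the path. -/
def IsCaterpillar {V : Type*} (T : SimpleGraph V) : Prop :=
  T.IsTree ∧ ∃ (u w : V) (p : T.Walk u w), p.IsPath ∧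
    ∀ x : V, x ∈ p.support ∨ ∃ y ∈ p.support, T.Adj x y

open Finset

namespace SimpleGraph

variable {V : Type*} {G : SimpleGraph V}

lemma dist_le_two_of_eq_or_adj {x y z : V} (hx : x = z ∨ G.Adj x z) (hy : y = z ∨ G.Adj y z) :
    G.dist x y ≤ 2 := by
  rcases hx with rfl | hxz <;> rcases hy with rfl | hyz
  · simp
  · exact (dist_le (Walk.cons hyz.symm .nil)).trans (by simp)
  · exact (dist_le (Walk.cons hxz .nil)).trans (by simp)
  · simpa using dist_le (Walk.cons hxz (Walk.cons hyz.symm .nil))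

section Fibers

variable [Fintype V] [DecidableEq V] (r : V → V)

noncomputable def fiberEndingAt (s : V) : List V :=
  ((univ.filter (r · = s)).erase s).toList ++ [s]

variable {r}

lemma mem_fiberEndingAt {s x : V} (hs : r s = s) : x ∈ fiberEndingAt r s ↔ r x = s := by
  by_cases hx : x = s
  · simp [fiberEndingAt, hx, hs]
  · simp [fiberEndingAt, hx]

lemma nodup_fiberEndingAt (s : V) : (fiberEndingAt r s).Nodup := by
  simp +contextual [fiberEndingAt, List.nodup_append, Finset.nodup_toList]

lemma getLast?_fiberEndingAt (s : V) : (fiberEndingAt r s).getLast? = some s := by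
  simp [fiberEndingAt]

end Fibers

lemma exists_retraction_of_forall_mem_or_adj {S : List V}
    (hcov : ∀ x, x ∈ S ∨ ∃ y ∈ S, G.Adj x y) :
    ∃ r : V → V, (∀ x, r x ∈ S) ∧ (∀ s ∈ S, r s = s) ∧ ∀ x, x = r x ∨ G.Adj x (r x) := by
  have : ∀ x, ∃ y ∈ S, (x ∈ S → y = x) ∧ (x = y ∨ G.Adj x y) := by
    intro x
    by_cases hx : x ∈ S
    · exact ⟨x, hx, fun _ => rfl, .inl rfl⟩
    · obtain ⟨y, hy, hxy⟩ := (hcov x).resolve_left hx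
      exact ⟨y, hy, fun h => (hx h).elim, .inr hxy⟩
  choose r hrS hr_self hr_adj using this
  exact ⟨r, hrS, hr_self, hr_adj⟩

theorem exists_list_isChain_dist_le_two [Fintype V] {S : List V} (hS : S.Nodup)
    (hSG : S.IsChain G.Adj) (hcov : ∀ x, x ∈ S ∨ ∃ y ∈ S, G.Adj x y) :
    ∃ L : List V, L.Nodup ∧ (∀ x, x ∈ L) ∧ L.IsChain fun x y => G.dist x y ≤ 2 := by
  classical
  obtain ⟨r, hrS, hr_self, hr_adj⟩ := exists_retraction_of_forall_mem_or_adj hcov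
  have hmem : ∀ s ∈ S, ∀ x, x ∈ fiberEndingAt r s ↔ r x = s :=
    fun s hs x => mem_fiberEndingAt (hr_self s hs)
  refine ⟨S.flatMap (fiberEndingAt r), ?_, fun x => List.mem_flatMap.mpr ⟨r x, hrS x, ?_⟩, ?_⟩
  · refine List.nodup_flatMap.mpr ⟨fun s _ => nodup_fiberEndingAt s, hS.imp_of_mem ?_⟩
    intro s s' hs hs' hne x hx hx'
    exact hne (((hmem s hs x).mp hx).symm.trans ((hmem s' hs' x).mp hx'))
  · exact (hmem _ (hrS x) x).mpr rfl
  · have hnear : ∀ s ∈ S, ∀ x ∈ fiberEndingAt r s, x = s ∨ G.Adj x s :=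
      fun s hs x hx => (hmem s hs x).mp hx ▸ hr_adj x
    rw [List.flatMap_def, List.isChain_flatten (by simp [fiberEndingAt]), List.isChain_map]
    refine ⟨?_, hSG.imp_of_mem_imp fun s s' _ hs' hss' x hx y hy => ?_⟩
    · simp only [List.mem_map]
      rintro _ ⟨s, hs, rfl⟩
      exact List.Pairwise.isChain <| List.pairwise_of_forall_mem_list fun x hx y hy =>
        dist_le_two_of_eq_or_adj (hnear s hs x hx) (hnear s hs y hy)
    · obtain rfl : s = x := by simpa [getLast?_fiberEndingAt] using hx
      exact dist_le_two_of_eq_or_adj (.inr hss') (hnear s' hs' y (List.mem_of_mem_head? hy))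

lemma Walk.mem_or_mem_of_mem_edges_of_length_le_two {u v : V} {e : Sym2 V} :
    ∀ (p : G.Walk u v), p.length ≤ 2 → e ∈ p.edges → u ∈ e ∨ v ∈ e
  | .nil, _, he => by simp at he
  | .cons _ .nil, _, he => by simp_all
  | .cons _ (.cons _ .nil), _, he => by
    simp only [edges_cons, edges_nil, List.mem_cons, List.not_mem_nil, or_false] at he
    rcases he with rfl | rfl <;> simp
  | .cons _ (.cons _ (.cons _ _)), hp, _ => by simp at hp

lemma Connected.reachable_deleteEdges_of_dist_le_two (hG : G.Connected) {u v : V}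
    (huv : G.dist u v ≤ 2) {e : Sym2 V} (hu : u ∉ e) (hv : v ∉ e) :
    (G.deleteEdges {e}).Reachable u v := by
  obtain ⟨p, hp⟩ := hG.exists_walk_length_eq_dist u v
  refine ⟨p.toDeleteEdge e fun he => ?_⟩
  rcases p.mem_or_mem_of_mem_edges_of_length_le_two (hp ▸ huv) he with h | h
  exacts [hu h, hv h]

lemma reachable_of_isChain_adj {l : List V} (hl : l.IsChain G.Adj) (hne : l ≠ []) :
    G.Reachable (l.head hne) (l.getLast hne) :=
  (reachable_iff_reflTransGen _ _).mpr (List.relationReflTransGen_of_exists_isChain l hl hne)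

lemma Iso.dist_apply_le {W : Type*} {G' : SimpleGraph W} (f : G ≃g G') (u v : V) :
    G'.dist (f u) (f v) ≤ G.dist u v := by
  by_cases h : G.Reachable u v
  · obtain ⟨p, hp⟩ := h.exists_walk_length_eq_dist
    simpa [hp] using dist_le (p.map f.toHom)
  · rw [dist_eq_zero_of_not_reachable h,
      dist_eq_zero_of_not_reachable (mt f.symm.reachable_iff.mpr (by simpa using h))]

lemma exists_equiv_fin_dist_succ_le_two [Fintype V] {n : ℕ} (hcard : Fintype.card V = n)
    {L : List V} (hnd : L.Nodup) (hmem : ∀ x, x ∈ L)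
    (hL : L.IsChain fun x y => G.dist x y ≤ 2) :
    ∃ e : V ≃ Fin n, ∀ i j : Fin n, (j : ℕ) = i + 1 → (G.map e.toEmbedding).dist i j ≤ 2 := by
  classical
  let enum : Fin L.length ≃ V := hnd.getEquivOfForallMemList L hmem
  have hlen : L.length = n := by simpa [← hcard] using Fintype.card_congr enum
  let e : V ≃ Fin n := enum.symm.trans (finCongr hlen)
  have he : ∀ i : Fin n, e.symm i = L[(i : ℕ)] := fun i => by simp [e, enum]
  refine ⟨e, fun i j hij => ?_⟩
  have hi : (i : ℕ) + 1 < L.length := by omega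
  calc (G.map e.toEmbedding).dist i j
      = (G.map e.toEmbedding).dist (Iso.map e G (e.symm i)) (Iso.map e G (e.symm j)) := by simp
    _ ≤ G.dist (e.symm i) (e.symm j) := Iso.dist_apply_le _ _ _
    _ = G.dist L[(i : ℕ)] L[(i : ℕ) + 1] := by simp only [he, hij]
    _ ≤ 2 := List.isChain_iff_getElem.mp hL i hi

variable {n : ℕ} {G : SimpleGraph (Fin n)}

lemma Connected.reachable_deleteEdges_of_forall_dist_succ_le_two (hG : G.Connected)
    (hd : ∀ i j : Fin n, (j : ℕ) = i + 1 → G.dist i j ≤ 2) {e : Sym2 (Fin n)} {i j : Fin n}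
    (hij : i ≤ j) (he : ∀ v ∈ e, v < i ∨ j < v) : (G.deleteEdges {e}).Reachable i j := by
  suffices h : ∀ m, (i : ℕ) ≤ m → ∀ hm : m ≤ j,
      (G.deleteEdges {e}).Reachable i ⟨m, hm.trans_lt j.isLt⟩ from h j hij le_rfl
  intro m hm
  induction m, hm using Nat.le_induction with
  | base => exact fun _ => .rfl
  | succ m him ih =>
    intro hmj
    refine (ih (by omega)).trans (hG.reachable_deleteEdges_of_dist_le_two (hd _ _ rfl) ?_ ?_) <;>
    · intro hmem
      rcases he _ hmem with h | h <;> simp only [Fin.lt_def] at h <;> omega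

theorem IsTree.length_le_three_of_isAdmissible (hG : G.IsTree)
    (hd : ∀ i j : Fin n, (j : ℕ) = i + 1 → G.dist i j ≤ 2) {l : List (Fin n)}
    (hl : IsAdmissible G l) : l.length ≤ 3 := by
  obtain ⟨i, j, hij, hhead, hlast, ⟨hchain, hnodup⟩, hmid, -⟩ := hl
  match l, hhead, hlast, hchain, hnodup, hmid with
  | [], _, _, _, _, _ | [_], _, _, _, _, _ | [_, _], _, _, _, _, _ | [_, _, _], _, _, _, _, _ =>
    simp
  | a :: b :: c :: d :: t, hhead, hlast, hchain, hnodup, hmid =>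
    obtain rfl : a = i := by simpa using hhead
    obtain ⟨hab, hchain⟩ := List.isChain_cons_cons.mp hchain
    obtain ⟨hbc, hcd⟩ := List.isChain_cons_cons.mp hchain
    simp only [List.nodup_cons, List.mem_cons, not_or] at hnodup
    have hb : b ∉ c :: d :: t := by grind
    set G' := G.deleteEdges {s(b, c)}
    have hba : G'.Reachable b a := by
      refine (deleteEdges_adj.mpr ⟨hab, ?_⟩).symm.reachable
      simp only [Set.mem_singleton_iff, Sym2.eq_iff]
      grind
    have haj : G'.Reachable a j :=
      hG.connected.reachable_deleteEdges_of_forall_dist_succ_le_two hd hij.le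
        fun v hv => hmid v (by rcases Sym2.mem_iff.mp hv with rfl | rfl <;> simp)
    have hcj : G'.Reachable c j := by
      have hchain' : (c :: d :: t).IsChain G'.Adj := hcd.imp_of_mem_imp fun x y hx hy hxy =>
        deleteEdges_adj.mpr ⟨hxy, by simp only [Set.mem_singleton_iff, Sym2.eq_iff]; grind⟩
      simp only [List.getLast?_eq_some_getLast (List.cons_ne_nil _ _), Option.some_inj] at hlast
      simpa [← hlast] using reachable_of_isChain_adj hchain' (List.cons_ne_nil _ _)
    exact (isAcyclic_iff_forall_adj_isBridge.mp hG.isAcyclic hbc)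
      (hba.trans (haj.trans hcj.symm)) |>.elim

end SimpleGraph

/-- Every caterpillar tree with `n` vertices admits a labeling by `{1,…,n}`
with `d(i, i+1) ≤ 2` for all `1 ≤ i < n`; consequently, with respect to this
labeling every admissible path has at most 3 vertices. -/
theorem caterpillar_labeling {V : Type*} [Fintype V] {n : ℕ}
    (T : SimpleGraph V) (hT : IsCaterpillar T) (hcard : Fintype.card V = n) :
    ∃ e : V ≃ Fin n,
      (∀ i j : Fin n, (j : ℕ) = (i : ℕ) + 1 → (T.map e.toEmbedding).dist i j ≤ 2) ∧
      (∀ l : List (Fin n), IsAdmissible (T.map e.toEmbedding) l → l.length ≤ 3) := by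
  obtain ⟨htree, u, w, p, hp, hcov⟩ := hT
  obtain ⟨L, hnd, hmem, hL⟩ :=
    SimpleGraph.exists_list_isChain_dist_le_two hp.support_nodup p.isChain_adj_support hcov
  obtain ⟨e, he⟩ := SimpleGraph.exists_equiv_fin_dist_succ_le_two hcard hnd hmem hL
  have htree' : (T.map e.toEmbedding).IsTree := (SimpleGraph.Iso.map e T).isTree_iff.mp htree
  exact ⟨e, he, fun l hl => htree'.length_le_three_of_isAdmissible he hl⟩
end

section
/- Let T, T_1, T_2 be trees such that T = T_1 ∪ {e} ∪ T_2, where T_1 and T_2 are vertex-disjoint caterpillar trees and e is an edge (a bridge) joining a vertex of the central path of T_1 to a vertex of the central path of T_2. Then T admits a bijective labeling of its vertices by {1,…,n} (n = |V(T)|) such that d(i, i+1) ≤ 2 for all 1 ≤ i < n; hence every admissible path of T with respect to this labeling has at most 3 vertices. -/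
/-!
In the square of a caterpillar there is a Hamiltonian path starting at any given spine vertex
`v`: from `v`, zig-zag out along the spine on one side of `v` and back (spine vertices of one
parity and leaves of the other on the way out, the rest on the way back) to end next to `v`,
visit the leaves of `v`, and traverse the other side in the same way. Reversing such a path of
`T₁` from `v₁` and appending one of `T₂` from `v₂` orders all vertices of `T` with consecutive
ones at distance at most 2; label them in this order.

An admissible path `i b c … j` with four or more vertices is then impossible: `b` and `c` lie
outside `[i, j]`, so the walks of length at most 2 joining consecutive labels `i, i+1, …, j`
avoid the edge `bc`; with the edge `bi` and the path `c … j` they connect `b` to `c` without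
`bc`, which contradicts `bc` being a bridge of the tree `T`.
-/

open SimpleGraph List

namespace SimpleGraph

variable {V W : Type*} {G : SimpleGraph V} {H : SimpleGraph W}

lemma Hom.edist_le (f : G →g H) (u v : V) : H.edist (f u) (f v) ≤ G.edist u v := by
  by_cases h : G.edist u v = ⊤
  · simp [h]
  · obtain ⟨p, hp⟩ := exists_walk_of_edist_ne_top h
    simpa [← hp] using SimpleGraph.edist_le (p.map f)

lemma edist_le_two_of_edist_le_one {s x y : V} (hx : G.edist s x ≤ 1) (hy : G.edist s y ≤ 1) :
    G.edist x y ≤ 2 :=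
  calc G.edist x y ≤ G.edist x s + G.edist s y := G.edist_triangle
    _ ≤ 1 + 1 := add_le_add (by rwa [edist_comm]) hy
    _ = 2 := one_add_one_eq_two

lemma isChain_edist_le_two_of_forall_edist_le_one {s : V} {l : List V}
    (h : ∀ x ∈ l, G.edist s x ≤ 1) : l.IsChain (G.edist · · ≤ 2) :=
  (pairwise_of_forall_mem_list fun x hx y hy ↦
    edist_le_two_of_edist_le_one (h x hx) (h y hy)).isChain

lemma map_inl_sup_map_inr (G : SimpleGraph V) (H : SimpleGraph W) :
    G.map Function.Embedding.inl ⊔ H.map Function.Embedding.inr = G ⊕g H := by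
  ext (a | b) (a' | b') <;> simp

lemma not_isCycle_sum_inl (hG : G.IsAcyclic) {a : V} (c : (G ⊕g H).Walk (.inl a) (.inl a)) :
    ¬ c.IsCycle := by
  classical
  intro hc
  have hs : ∀ x ∈ c.support, x ∈ Set.range (Embedding.sumInl (G := G) (H := H)) := by
    rintro (x | y) hx
    · exact ⟨x, rfl⟩
    · exact absurd (c.takeUntil _ hx).reachable (not_reachable_sum_inl_inr a y)
  refine ((Embedding.sumInl (H := H)).isoInduceRange.isAcyclic_iff.mp hG) (c.induce _ hs) ?_
  rwa [← Walk.isCycle_map_iff_of_injective (f := (Embedding.induce _).toHom)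
    (Embedding.induce (G := G ⊕g H) _).injective, Walk.map_induce]

lemma IsAcyclic.sum (hG : G.IsAcyclic) (hH : H.IsAcyclic) : (G ⊕g H).IsAcyclic := by
  rintro (a | b) c hc
  · exact not_isCycle_sum_inl hG c hc
  · exact not_isCycle_sum_inl hH (c.map Iso.sumComm.toHom) (hc.map Iso.sumComm.injective)

section Caterpillar

variable (leaves : V → List V)

/-- Traversal of a caterpillar arm with spine `s₁ s₂ s₃ …`, namely
`s₁, (leaves s₂).reverse, s₃, leaves s₃, s₂, leaves s₁` for three spine vertices: it starts at
`s₁` and ends next to it. -/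
def zigzag : List V → List V
  | [] => []
  | s :: spine => s :: ((zigzag spine).reverse ++ leaves s)

lemma zigzag_perm : ∀ spine : List V,
    zigzag leaves spine ~ spine.flatMap fun s ↦ s :: leaves s
  | [] => .rfl
  | s :: spine => by
    rw [zigzag, flatMap_cons, cons_append]
    exact .cons s <| ((reverse_perm _).append_right _).trans <|
      perm_append_comm.trans <| (zigzag_perm spine).append_left _

variable {leaves}

lemma zigzag_cons_spec (hleaves : ∀ s, ∀ x ∈ leaves s, G.Adj s x) :
    ∀ (s : V) (spine : List V), (s :: spine).IsChain G.Adj →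
      (zigzag leaves (s :: spine)).IsChain (G.edist · · ≤ 2) ∧
      ∀ x ∈ (zigzag leaves (s :: spine)).getLast?, G.edist s x ≤ 1
  | s, [], _ => by
    have hnear : ∀ x ∈ s :: leaves s, G.edist s x ≤ 1 := by
      simp only [mem_cons, forall_eq_or_imp, edist_self, zero_le, true_and]
      exact fun x hx ↦ (edist_eq_one_iff_adj.mpr (hleaves s x hx)).le
    simp only [zigzag, reverse_nil, nil_append]
    exact ⟨isChain_edist_le_two_of_forall_edist_le_one hnear,
      fun x hx ↦ hnear x (mem_of_mem_getLast? hx)⟩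
  | s, t :: spine, hchain => by
    obtain ⟨hst, htspine⟩ := isChain_cons_cons.mp hchain
    obtain ⟨hZ, hZlast⟩ := zigzag_cons_spec hleaves t spine htspine
    set Z := zigzag leaves (t :: spine) with hZdef
    have hZhead : Z.head? = some t := rfl
    have hnear : ∀ x ∈ t :: leaves s, G.edist s x ≤ 1 := by
      simp only [mem_cons, forall_eq_or_imp]
      exact ⟨(edist_eq_one_iff_adj.mpr hst).le,
        fun x hx ↦ (edist_eq_one_iff_adj.mpr (hleaves s x hx)).le⟩
    rw [zigzag, ← hZdef]
    refine ⟨isChain_cons.mpr ⟨fun y hy ↦ ?_, ?_⟩, fun x hx ↦ ?_⟩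
    · rw [head?_append_of_ne_nil _ (by simp [Z, zigzag]), head?_reverse] at hy
      exact edist_le_two_of_edist_le_one (edist_eq_one_iff_adj.mpr hst.symm).le (hZlast y hy)
    · refine (isChain_reverse.mpr (hZ.imp fun x y h ↦ by rwa [edist_comm])).append
        (isChain_edist_le_two_of_forall_edist_le_one fun x hx ↦ hnear x (mem_cons_of_mem _ hx))
        fun x hx y hy ↦ ?_
      rw [getLast?_reverse, hZhead, Option.mem_some_iff] at hx
      exact edist_le_two_of_edist_le_one (hx ▸ hnear t mem_cons_self)
        (hnear y (mem_cons_of_mem _ (mem_of_mem_head? hy)))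
    · rw [getLast?_cons, getLast?_append, getLast?_reverse, hZhead] at hx
      rcases h : (leaves s).getLast? with _ | y
      all_goals simp only [h, Option.or_some, Option.getD_some, Option.mem_some_iff] at hx
      all_goals subst hx
      · exact hnear _ mem_cons_self
      · exact hnear _ (mem_cons_of_mem _ (mem_of_mem_getLast? h))

lemma exists_isChain_perm_flatMap_of_mem (hleaves : ∀ s, ∀ x ∈ leaves s, G.Adj s x)
    {spine : List V} (hspine : spine.IsChain G.Adj) {v : V} (hv : v ∈ spine) :
    ∃ L : List V, L.head? = some v ∧ L.IsChain (G.edist · · ≤ 2) ∧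
      L ~ spine.flatMap fun s ↦ s :: leaves s := by
  obtain ⟨E, D, rfl⟩ := append_of_mem hv
  obtain ⟨hE, hD⟩ := isChain_split.mp hspine
  obtain ⟨hZD, hZDlast⟩ := zigzag_cons_spec hleaves v D hD
  have hE' : (v :: E.reverse).IsChain G.Adj := by
    simpa using isChain_reverse.mpr (hE.imp fun _ _ h ↦ h.symm)
  refine ⟨zigzag leaves (v :: D) ++ zigzag leaves E.reverse, rfl, ?_, ?_⟩
  · cases hErev : E.reverse with
    | nil => simpa [zigzag] using hZD
    | cons e E' =>
      rw [hErev] at hE'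
      obtain ⟨hve, hE''⟩ := isChain_cons_cons.mp hE'
      refine hZD.append (zigzag_cons_spec hleaves e E' hE'').1 fun x hx y hy ↦ ?_
      obtain rfl : y = e := by simpa [zigzag] using hy.symm
      exact edist_le_two_of_edist_le_one (hZDlast x hx) (edist_eq_one_iff_adj.mpr hve).le
  · calc zigzag leaves (v :: D) ++ zigzag leaves E.reverse
        ~ (v :: D).flatMap (fun s ↦ s :: leaves s) ++
            E.reverse.flatMap (fun s ↦ s :: leaves s) :=
          (zigzag_perm leaves _).append (zigzag_perm leaves _)
      _ ~ E.flatMap (fun s ↦ s :: leaves s) ++ (v :: D).flatMap (fun s ↦ s :: leaves s) :=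
          perm_append_comm.trans (((reverse_perm E).flatMap_right _).append_right _)
      _ = (E ++ v :: D).flatMap (fun s ↦ s :: leaves s) := (flatMap_append ..).symm

lemma exists_isChain_perm_flatMap_of_adj (hleaves : ∀ s, ∀ x ∈ leaves s, G.Adj s x)
    {spine₁ spine₂ : List V} (h₁ : spine₁.IsChain G.Adj) (h₂ : spine₂.IsChain G.Adj)
    {v₁ v₂ : V} (hv₁ : v₁ ∈ spine₁) (hv₂ : v₂ ∈ spine₂) (hv : G.Adj v₁ v₂) :
    ∃ L : List V, L.IsChain (G.edist · · ≤ 2) ∧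
      L ~ (spine₁ ++ spine₂).flatMap fun s ↦ s :: leaves s := by
  obtain ⟨L₁, hhead₁, hL₁, hperm₁⟩ := exists_isChain_perm_flatMap_of_mem hleaves h₁ hv₁
  obtain ⟨L₂, hhead₂, hL₂, hperm₂⟩ := exists_isChain_perm_flatMap_of_mem hleaves h₂ hv₂
  refine ⟨L₁.reverse ++ L₂, ?_, ?_⟩
  · refine (isChain_reverse.mpr (hL₁.imp fun x y h ↦ by rwa [edist_comm])).append hL₂ ?_
    simp only [getLast?_reverse, hhead₁, hhead₂, Option.mem_some_iff, forall_eq']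
    exact (edist_eq_one_iff_adj.mpr hv).le.trans one_le_two
  · rw [flatMap_append]
    exact ((reverse_perm L₁).trans hperm₁).append hperm₂

end Caterpillar

lemma exists_leaves_nodup_flatMap [Fintype V] {spine : List V} (hspine : spine.Nodup)
    (hcover : ∀ x, x ∈ spine ∨ ∃ y ∈ spine, G.Adj x y) :
    ∃ leaves : V → List V, (∀ s, ∀ x ∈ leaves s, G.Adj s x) ∧
      (spine.flatMap fun s ↦ s :: leaves s).Nodup ∧
      ∀ x, x ∈ spine.flatMap fun s ↦ s :: leaves s := by
  classical
  have : ∀ x, ∃ y, x ∉ spine → y ∈ spine ∧ G.Adj y x := fun x ↦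
    (hcover x).elim (fun hx ↦ ⟨x, absurd hx⟩) fun ⟨y, hy, hxy⟩ ↦ ⟨y, fun _ ↦ ⟨hy, hxy.symm⟩⟩
  choose parent hparent using this
  refine ⟨fun s ↦ (Finset.univ.filter fun x ↦ x ∉ spine ∧ parent x = s).toList,
    fun s x hx ↦ ?_, nodup_flatMap.mpr ⟨fun s hs ↦ ?_, hspine.pairwise_of_forall_ne ?_⟩,
    fun x ↦ ?_⟩
  · simp only [Finset.mem_toList, Finset.mem_filter, Finset.mem_univ, true_and] at hx
    exact hx.2 ▸ (hparent x hx.1).2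
  · simp only [nodup_cons, Finset.mem_toList, Finset.mem_filter, Finset.mem_univ, true_and]
    exact ⟨fun h ↦ h.1 hs, Finset.nodup_toList _⟩
  · intro a ha b hb hab x hxa hxb
    simp only [mem_cons, Finset.mem_toList, Finset.mem_filter, Finset.mem_univ,
      true_and] at hxa hxb
    grind
  · by_cases hx : x ∈ spine
    · exact mem_flatMap.mpr ⟨x, hx, mem_cons_self⟩
    · exact mem_flatMap.mpr ⟨parent x, (hparent x hx).1, by simp [hx]⟩

lemma exists_isChain_nodup_of_caterpillars [Fintype V] [Fintype W]
    {S₁ : List V} (h₁ : S₁.IsChain G.Adj) (hnd₁ : S₁.Nodup)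
    (hcover₁ : ∀ x, x ∈ S₁ ∨ ∃ y ∈ S₁, G.Adj x y)
    {S₂ : List W} (h₂ : S₂.IsChain H.Adj) (hnd₂ : S₂.Nodup)
    (hcover₂ : ∀ x, x ∈ S₂ ∨ ∃ y ∈ S₂, H.Adj x y)
    {v : V} {w : W} (hv : v ∈ S₁) (hw : w ∈ S₂) :
    ∃ L : List (V ⊕ W), L.Nodup ∧ (∀ x, x ∈ L) ∧
      L.IsChain (((G ⊕g H) ⊔ edge (Sum.inl v) (Sum.inr w)).edist · · ≤ 2) := by
  set T := (G ⊕g H) ⊔ edge (Sum.inl v) (Sum.inr w)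
  set S := S₁.map Sum.inl ++ S₂.map Sum.inr
  have hS₁ : (S₁.map Sum.inl).IsChain T.Adj :=
    (isChain_map _).mpr (h₁.imp fun _ _ h ↦ Or.inl h)
  have hS₂ : (S₂.map Sum.inr).IsChain T.Adj :=
    (isChain_map _).mpr (h₂.imp fun _ _ h ↦ Or.inl h)
  have hnd : S.Nodup :=
    nodup_append.mpr ⟨hnd₁.map Sum.inl_injective, hnd₂.map Sum.inr_injective, by simp⟩
  have hcover : ∀ x, x ∈ S ∨ ∃ y ∈ S, T.Adj x y := by
    rintro (a | b)
    · rcases hcover₁ a with ha | ⟨y, hy, hay⟩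
      exacts [.inl (by simp [S, ha]), .inr ⟨.inl y, by simp [S, hy], .inl hay⟩]
    · rcases hcover₂ b with hb | ⟨y, hy, hby⟩
      exacts [.inl (by simp [S, hb]), .inr ⟨.inr y, by simp [S, hy], .inl hby⟩]
  obtain ⟨leaves, hleaves, hnodup, hmem⟩ := exists_leaves_nodup_flatMap hnd hcover
  obtain ⟨L, hL, hperm⟩ := exists_isChain_perm_flatMap_of_adj hleaves hS₁ hS₂
    (mem_map_of_mem hv) (mem_map_of_mem hw) (.inr (by simp [edge_adj]))
  exact ⟨L, hperm.nodup_iff.mpr hnodup, fun x ↦ hperm.mem_iff.mpr (hmem x), hL⟩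

end SimpleGraph

lemma List.Nodup.exists_equiv_fin_of_isChain {V : Type*} [Fintype V] {n : ℕ}
    {R : V → V → Prop} {L : List V} (hnodup : L.Nodup) (hmem : ∀ x, x ∈ L)
    (hchain : L.IsChain R) (hn : Fintype.card V = n) :
    ∃ e : V ≃ Fin n, ∀ i j : Fin n, (j : ℕ) = i + 1 → R (e.symm i) (e.symm j) := by
  classical
  let e₀ := hnodup.getEquivOfForallMemList L hmem
  have hlen : L.length = n := by simpa using (Fintype.card_congr e₀).trans hn
  refine ⟨e₀.symm.trans (finCongr hlen), fun i j hij ↦ ?_⟩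
  have := isChain_iff_getElem.mp hchain i (by omega)
  simpa [e₀, List.Nodup.getEquivOfForallMemList, hij] using this

namespace SimpleGraph

lemma Walk.eq_or_eq_of_mem_edges_of_length_le_two {V : Type*} {G : SimpleGraph V}
    {x y b c : V} {p : G.Walk x y} (hp : p.length ≤ 2) (he : s(b, c) ∈ p.edges) :
    b = x ∨ b = y ∨ c = x ∨ c = y := by
  rcases p with _ | ⟨_, _ | ⟨_, _ | ⟨_, p⟩⟩⟩ <;> simp at hp he <;> grind

lemma reachable_deleteEdges_of_edist_le_two {V : Type*} {G : SimpleGraph V} {x y b c : V}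
    (h : G.edist x y ≤ 2) (hb : b ≠ x ∧ b ≠ y) (hc : c ≠ x ∧ c ≠ y) :
    (G.deleteEdges {s(b, c)}).Reachable x y := by
  obtain ⟨p, hp⟩ := exists_walk_of_edist_ne_top (ne_top_of_le_ne_top (by decide) h)
  refine ⟨p.toDeleteEdges _ fun e he he' ↦ ?_⟩
  rw [Set.mem_singleton_iff] at he'
  subst he'
  have := p.eq_or_eq_of_mem_edges_of_length_le_two (by exact_mod_cast hp.le.trans h) he
  tauto

variable {n : ℕ} {G : SimpleGraph (Fin n)}

lemma reachable_deleteEdges_of_forall_edist_succ_le_two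
    (hstep : ∀ i j : Fin n, (j : ℕ) = i + 1 → G.edist i j ≤ 2) {b c i : Fin n} :
    ∀ (k : ℕ) (j : Fin n), (j : ℕ) = i + k → (b < i ∨ j < b) → (c < i ∨ j < c) →
      (G.deleteEdges {s(b, c)}).Reachable i j
  | 0, j, hj, _, _ => (Fin.ext (by simpa using hj.symm) : i = j) ▸ .refl _
  | k + 1, j, hj, hb, hc => by
    simp only [Fin.lt_def] at hb hc
    let m : Fin n := ⟨i + k, by omega⟩
    refine (reachable_deleteEdges_of_forall_edist_succ_le_two hstep k m rfl ?_ ?_).trans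
      (reachable_deleteEdges_of_edist_le_two (hstep m j (by simp [m, hj]; omega)) ?_ ?_)
    all_goals simp only [Fin.lt_def, ne_eq, Fin.ext_iff, m]; omega

theorem IsAdmissible.length_le_three (hG : G.IsAcyclic)
    (hstep : ∀ i j : Fin n, (j : ℕ) = i + 1 → G.edist i j ≤ 2) {l : List (Fin n)}
    (hl : IsAdmissible G l) : l.length ≤ 3 := by
  obtain ⟨i, j, hij, hhead, hlast, ⟨hchain, hnodup⟩, hout, -⟩ := hl
  rcases l with _ | ⟨a, _ | ⟨b, _ | ⟨c, _ | ⟨d, l⟩⟩⟩⟩ <;>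
    simp only [length_cons, length_nil] <;> try omega
  exfalso
  obtain rfl : i = a := by simpa using hhead.symm
  obtain ⟨hib, hbc, hcj⟩ : G.Adj i b ∧ G.Adj b c ∧ (c :: d :: l).IsChain G.Adj := by
    rwa [Chain', isChain_cons_cons, isChain_cons_cons] at hchain
  rw [nodup_cons, nodup_cons] at hnodup
  obtain ⟨hi_notMem, hb_notMem, -⟩ := hnodup
  set G' := G.deleteEdges {s(b, c)}
  have hij' : G'.Reachable i j :=
    reachable_deleteEdges_of_forall_edist_succ_le_two hstep (j - i) j
      (by rw [Fin.lt_def] at hij; omega) (hout b (by simp)) (hout c (by simp))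
  have hcj' : G'.Reachable c j := by
    have hchain' : (c :: d :: l).IsChain G'.Adj := hcj.imp_of_mem_imp fun x y hx hy hxy ↦
      deleteEdges_adj.mpr ⟨hxy, fun h ↦ by
        rcases Sym2.eq_iff.mp (Set.mem_singleton_iff.mp h) with ⟨rfl, -⟩ | ⟨-, rfl⟩ <;>
          contradiction⟩
    rw [reachable_iff_reflTransGen]
    exact relationReflTransGen_of_exists_isChain_cons _ hchain'
      (by simpa [getLast?_eq_some_getLast] using hlast)
  have hbi : G'.Adj b i := deleteEdges_adj.mpr ⟨hib.symm, fun h ↦ by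
    rcases Sym2.eq_iff.mp (Set.mem_singleton_iff.mp h) with ⟨-, rfl⟩ | ⟨rfl, -⟩
    exacts [hi_notMem (by simp), hbc.ne rfl]⟩
  exact isBridge_iff.mp (isAcyclic_iff_forall_adj_isBridge.mp hG hbc)
    (hbi.reachable.trans (hij'.trans hcj'.symm))

end SimpleGraph

/-- If `T` is obtained from two vertex-disjoint caterpillar trees `T₁`, `T₂`
by adding a bridge joining a vertex `v₁` of the central path of `T₁` to a
vertex `v₂` of the central path of `T₂`, then `T` admits a labeling by
`{1,…,n}` with `d(i, i+1) ≤ 2` for all `1 ≤ i < n`; hence every admissible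
path of `T` with respect to this labeling has at most 3 vertices. -/
theorem bridge_of_caterpillars_labeling {V₁ V₂ : Type*} [Fintype V₁] [Fintype V₂]
    {n : ℕ} (T₁ : SimpleGraph V₁) (T₂ : SimpleGraph V₂)
    (hT₁ : T₁.IsTree) (hT₂ : T₂.IsTree)
    (u₁ w₁ : V₁) (p₁ : T₁.Walk u₁ w₁) (hp₁ : p₁.IsPath)
    (hcover₁ : ∀ x : V₁, x ∈ p₁.support ∨ ∃ y ∈ p₁.support, T₁.Adj x y)
    (u₂ w₂ : V₂) (p₂ : T₂.Walk u₂ w₂) (hp₂ : p₂.IsPath)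
    (hcover₂ : ∀ x : V₂, x ∈ p₂.support ∨ ∃ y ∈ p₂.support, T₂.Adj x y)
    (v₁ : V₁) (hv₁ : v₁ ∈ p₁.support) (v₂ : V₂) (hv₂ : v₂ ∈ p₂.support)
    (T : SimpleGraph (V₁ ⊕ V₂))
    (hT : T = T₁.map Function.Embedding.inl ⊔ T₂.map Function.Embedding.inr ⊔
      SimpleGraph.fromEdgeSet {s(Sum.inl v₁, Sum.inr v₂)})
    (hcard : Fintype.card V₁ + Fintype.card V₂ = n) :
    ∃ e : (V₁ ⊕ V₂) ≃ Fin n,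
      (∀ i j : Fin n, (j : ℕ) = (i : ℕ) + 1 → (T.map e.toEmbedding).dist i j ≤ 2) ∧
      (∀ l : List (Fin n), IsAdmissible (T.map e.toEmbedding) l → l.length ≤ 3) := by
  classical
  obtain rfl : T = (T₁ ⊕g T₂) ⊔ edge (Sum.inl v₁) (Sum.inr v₂) := by
    rw [hT, map_inl_sup_map_inr]; rfl
  set T := (T₁ ⊕g T₂) ⊔ edge (Sum.inl v₁) (Sum.inr v₂)
  obtain ⟨L, hnodup, hmem, hchain⟩ := exists_isChain_nodup_of_caterpillars
    p₁.isChain_adj_support hp₁.support_nodup hcover₁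
    p₂.isChain_adj_support hp₂.support_nodup hcover₂ hv₁ hv₂
  obtain ⟨e, he⟩ := hnodup.exists_equiv_fin_of_isChain hmem hchain
    (by rw [Fintype.card_sum, hcard])
  have hstep : ∀ i j : Fin n, (j : ℕ) = i + 1 → (T.map e.toEmbedding).edist i j ≤ 2 :=
    fun i j hij ↦ by
      simpa using ((Iso.map e T).toHom.edist_le (e.symm i) (e.symm j)).trans (he i j hij)
  have hacyc : (T.map e.toEmbedding).IsAcyclic := (Iso.map e T).isAcyclic_iff.mp <|
    (hT₁.isAcyclic.sum hT₂.isAcyclic).sup_edge_of_not_reachable (not_reachable_sum_inl_inr _ _)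
  exact ⟨e, fun i j hij ↦ ENat.toNat_le_of_le_natCast (hstep i j hij),
    fun l hl ↦ hl.length_le_three hacyc hstep⟩
end
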